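/- arXiv:1607.00673 — 2 statements merged into one kernel-verified Lean document; each statement's English description precedes it below -/
import Mathlib

section
/- Let $a_1,\dots,a_n$ be independent Bernoulli($\theta_i$) random variables and set $\xi_i=a_i-\theta_i$. Then for any real matrix $A$ with $n$ columns and any $t>0$, $\mathbb{P}\big(\|A\xi\|_2^2 > \tfrac{1}{2}\|A\|_F^2 + \tfrac{3t}{4}\|A\|_{op}^2\big) \le e^{-t}$. -/
/-!
Chernoff's bound reduces the claim to the moment generating function estimate
`E exp (l ‖Aξ‖²) ≤ exp (2 c l ‖A‖_F²)` for `l = 1 / (3 c ‖A‖_op²)`, where `c` is the sub-Gaussian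
variance proxy of `ξ` (`c = 1/4` for centred Bernoulli variables, by Hoeffding's lemma).
To prove it, write `exp (l ‖x‖²)` as a Gaussian average of `exp (√(2l) ⟪g, x⟫)`: after exchanging
the two integrals, the sub-Gaussian bound applies to the linear form `⟪√(2l) Aᵀg, ξ⟫` and leaves
the Gaussian integral of `exp (c l ‖Aᵀg‖²)`. An orthogonal change of variables diagonalising
`A Aᵀ` splits it into one-dimensional factors `(1 - 2 c l μ)^(-1/2) ≤ exp (2 c l μ)`, because every
eigenvalue `μ` is at most `‖A‖_op²` and `1 / √(1 - x) ≤ exp x` on `[0, 2/3]`; the eigenvalues sum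
to `‖A‖_F²`.
-/

open MeasureTheory ProbabilityTheory Real Matrix

lemma exp_neg_two_mul_le_one_sub {x : ℝ} (hx0 : 0 ≤ x) (hx : x ≤ 2 / 3) :
    exp (-(2 * x)) ≤ 1 - x := by
  have hexp : 1 + 2 * x + 2 * x ^ 2 ≤ exp (2 * x) := by
    have := sum_le_exp_of_nonneg (x := 2 * x) (by linarith) 3
    norm_num [Finset.sum_range_succ] at this
    nlinarith
  rw [exp_neg, inv_le_iff_one_le_mul₀ (exp_pos _)]
  nlinarith

lemma inv_sqrt_one_sub_le_exp {x : ℝ} (hx0 : 0 ≤ x) (hx : x ≤ 2 / 3) :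
    (√(1 - x))⁻¹ ≤ exp x := by
  have h : exp (-x) ≤ √(1 - x) := by
    rw [show -x = -(2 * x) / 2 by ring, exp_half]
    exact sqrt_le_sqrt (exp_neg_two_mul_le_one_sub hx0 hx)
  simpa [exp_neg] using inv_anti₀ (exp_pos _) h

lemma integral_exp_neg_sq_div_two_add_mul (v : ℝ) :
    ∫ x : ℝ, exp (-x ^ 2 / 2 + x * v) = √(2 * π) * exp (v ^ 2 / 2) := by
  have hsq (x : ℝ) : exp (-x ^ 2 / 2 + x * v) = exp (v ^ 2 / 2) * exp (-(1 / 2) * (x - v) ^ 2) := by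
    rw [← exp_add]; ring_nf
  simp_rw [hsq, integral_const_mul, integral_sub_right_eq_self (fun x ↦ exp (-(1 / 2) * x ^ 2)),
    integral_gaussian]
  rw [show π / (1 / 2) = 2 * π by ring, mul_comm]

lemma integrable_exp_neg_sq_div_two_add_mul (v : ℝ) :
    Integrable fun x : ℝ ↦ exp (-x ^ 2 / 2 + x * v) := by
  have := ((integrable_exp_neg_mul_sq (b := 1 / 2) (by norm_num)).comp_sub_right v).const_mul
    (exp (v ^ 2 / 2))
  refine this.congr (ae_of_all _ fun x ↦ ?_)
  simp only [← exp_add]; ring_nf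

-- For `1/2 ≤ d` both sides are the junk value `0`.
lemma integral_exp_neg_sq_div_two_add_mul_sq (d : ℝ) :
    ∫ x : ℝ, exp (-x ^ 2 / 2 + d * x ^ 2) = √(2 * π) / √(1 - 2 * d) := by
  have hsq (x : ℝ) : -x ^ 2 / 2 + d * x ^ 2 = -(1 / 2 - d) * x ^ 2 := by ring
  simp_rw [hsq, integral_gaussian]
  rw [← sqrt_div (by positivity)]
  congr 1
  field_simp

lemma integrable_exp_neg_sq_div_two_add_mul_sq {d : ℝ} (hd : d < 1 / 2) :
    Integrable fun x : ℝ ↦ exp (-x ^ 2 / 2 + d * x ^ 2) := by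
  have hsq (x : ℝ) : -x ^ 2 / 2 + d * x ^ 2 = -(1 / 2 - d) * x ^ 2 := by ring
  simp_rw [hsq]
  exact integrable_exp_neg_mul_sq (by linarith)

section

variable {ι κ : Type*} [Fintype ι] [Fintype κ]

lemma dotProduct_self_nonneg (v : ι → ℝ) : 0 ≤ v ⬝ᵥ v :=
  Finset.sum_nonneg fun i _ ↦ mul_self_nonneg (v i)

lemma lintegral_ofReal_fintype_prod_volume_eq_prod (f : ι → ℝ → ℝ) (hf : ∀ i, Integrable (f i))
    (hf_nonneg : ∀ i x, 0 ≤ f i x) :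
    ∫⁻ x : ι → ℝ, ENNReal.ofReal (∏ i, f i (x i)) = ENNReal.ofReal (∏ i, ∫ y, f i y) := by
  rw [← integral_fintype_prod_volume_eq_prod, ← ofReal_integral_eq_lintegral_ofReal]
  · exact Integrable.fintype_prod (μ := fun _ ↦ volume) hf
  · exact ae_of_all _ fun x ↦ Finset.prod_nonneg fun i _ ↦ hf_nonneg i _

lemma exp_neg_dotProduct_self_div_two_add_sum (g : ι → ℝ) (q : ι → ℝ) :
    exp (-(g ⬝ᵥ g) / 2 + ∑ i, q i) = ∏ i, exp (-g i ^ 2 / 2 + q i) := by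
  rw [← exp_sum, Finset.sum_add_distrib, dotProduct, ← Finset.sum_neg_distrib, Finset.sum_div]
  simp only [sq]

lemma transpose_mul_self_of_mem_unitaryGroup [DecidableEq ι] {U : Matrix ι ι ℝ}
    (hU : U ∈ unitaryGroup ι ℝ) : Uᵀ * U = 1 := by
  simpa [star_eq_conjTranspose, conjTranspose_eq_transpose_of_trivial] using hU.1

lemma dotProduct_mulVec_self_of_mem_unitaryGroup [DecidableEq ι] {U : Matrix ι ι ℝ}
    (hU : U ∈ unitaryGroup ι ℝ) (x : ι → ℝ) : (U *ᵥ x) ⬝ᵥ (U *ᵥ x) = x ⬝ᵥ x := by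
  rw [dotProduct_mulVec, ← mulVec_transpose, mulVec_mulVec,
    transpose_mul_self_of_mem_unitaryGroup hU, one_mulVec]

lemma measurePreserving_mulVec_of_mem_unitaryGroup [DecidableEq ι] {U : Matrix ι ι ℝ}
    (hU : U ∈ unitaryGroup ι ℝ) : MeasurePreserving (U *ᵥ ·) volume volume := by
  have hdet : U.det * U.det = 1 := by
    simpa using (det_of_mem_unitary hU).1
  have habs : |U.det| = 1 := by
    rcases mul_self_eq_one_iff.mp hdet with h | h <;> simp [h]
  refine ⟨(toLin' U).continuous_of_finiteDimensional.measurable, ?_⟩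
  have := map_matrix_volume_pi_eq_smul_volume_pi (M := U) (by grind)
  rw [abs_inv, habs, inv_one, ENNReal.ofReal_one, one_smul] at this
  exact this

lemma mulVec_dotProduct_mulVec_mulVec (A : Matrix κ ι ℝ) (M : Matrix κ κ ℝ) (x : ι → ℝ) :
    (A *ᵥ x) ⬝ᵥ (M *ᵥ (A *ᵥ x)) = x ⬝ᵥ ((Aᵀ * M * A) *ᵥ x) := by
  rw [dotProduct_comm, dotProduct_mulVec, ← mulVec_transpose, mulVec_mulVec, mulVec_mulVec,
    dotProduct_comm]

lemma lintegral_gaussian_exp_dotProduct (v : ι → ℝ) :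
    ∫⁻ g : ι → ℝ, ENNReal.ofReal (exp (-(g ⬝ᵥ g) / 2 + g ⬝ᵥ v))
      = ENNReal.ofReal (√(2 * π) ^ Fintype.card ι * exp ((v ⬝ᵥ v) / 2)) := by
  have hprod (g : ι → ℝ) : exp (-(g ⬝ᵥ g) / 2 + g ⬝ᵥ v) = ∏ i, exp (-g i ^ 2 / 2 + g i * v i) :=
    exp_neg_dotProduct_self_div_two_add_sum g _
  simp_rw [hprod]
  rw [lintegral_ofReal_fintype_prod_volume_eq_prod (fun i x ↦ exp (-x ^ 2 / 2 + x * v i))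
    (fun i ↦ integrable_exp_neg_sq_div_two_add_mul (v i)) (fun _ _ ↦ (exp_pos _).le)]
  simp_rw [integral_exp_neg_sq_div_two_add_mul, Finset.prod_mul_distrib, Finset.prod_const,
    Finset.card_univ, ← exp_sum, dotProduct, Finset.sum_div, sq]

lemma lintegral_gaussian_exp_sum_mul_sq {d : ι → ℝ} (hd : ∀ i, d i < 1 / 2) :
    ∫⁻ g : ι → ℝ, ENNReal.ofReal (exp (-(g ⬝ᵥ g) / 2 + ∑ i, d i * g i ^ 2))
      = ENNReal.ofReal (∏ i, √(2 * π) / √(1 - 2 * d i)) := by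
  simp_rw [exp_neg_dotProduct_self_div_two_add_sum]
  rw [lintegral_ofReal_fintype_prod_volume_eq_prod (fun i x ↦ exp (-x ^ 2 / 2 + d i * x ^ 2))
    (fun i ↦ integrable_exp_neg_sq_div_two_add_mul_sq (hd i)) (fun _ _ ↦ (exp_pos _).le)]
  simp_rw [integral_exp_neg_sq_div_two_add_mul_sq]

lemma Matrix.IsHermitian.lintegral_gaussian_exp_quadForm [DecidableEq ι] {M : Matrix ι ι ℝ}
    (hM : M.IsHermitian) (hM_lt : ∀ i, hM.eigenvalues i < 1 / 2) :
    ∫⁻ g : ι → ℝ, ENNReal.ofReal (Real.exp (-(g ⬝ᵥ g) / 2 + g ⬝ᵥ (M *ᵥ g)))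
      = ENNReal.ofReal (∏ i, √(2 * π) / √(1 - 2 * hM.eigenvalues i)) := by
  set U : Matrix ι ι ℝ := (hM.eigenvectorUnitary : Matrix ι ι ℝ)
  have hU : U ∈ unitaryGroup ι ℝ := hM.eigenvectorUnitary.2
  have hdiag : Uᵀ * M * U = diagonal hM.eigenvalues := by
    simpa [Unitary.conjStarAlgAut_apply, star_eq_conjTranspose,
      conjTranspose_eq_transpose_of_trivial] using hM.conjStarAlgAut_star_eigenvectorUnitary
  rw [← (measurePreserving_mulVec_of_mem_unitaryGroup hU).lintegral_comp (by fun_prop),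
    ← lintegral_gaussian_exp_sum_mul_sq hM_lt]
  refine lintegral_congr fun g ↦ ?_
  rw [mulVec_dotProduct_mulVec_mulVec, hdiag, dotProduct_mulVec_self_of_mem_unitaryGroup hU]
  simp [dotProduct, mulVec_diagonal, sq, mul_left_comm]

lemma Matrix.IsHermitian.eigenvalues_eq_dotProduct_mulVec [DecidableEq ι] {M : Matrix ι ι ℝ}
    (hM : M.IsHermitian) (i : ι) :
    hM.eigenvalues i = ⇑(hM.eigenvectorBasis i) ⬝ᵥ (M *ᵥ ⇑(hM.eigenvectorBasis i)) := by
  simpa using hM.eigenvalues_eq i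

lemma Matrix.IsHermitian.dotProduct_self_eigenvectorBasis [DecidableEq ι] {M : Matrix ι ι ℝ}
    (hM : M.IsHermitian) (i : ι) :
    ⇑(hM.eigenvectorBasis i) ⬝ᵥ ⇑(hM.eigenvectorBasis i) = 1 := by
  have h := real_inner_self_eq_norm_sq (hM.eigenvectorBasis i)
  rw [EuclideanSpace.inner_eq_star_dotProduct, hM.eigenvectorBasis.orthonormal.1 i] at h
  simpa using h

lemma Matrix.IsHermitian.lintegral_gaussian_exp_quadForm_le [DecidableEq ι] {M : Matrix ι ι ℝ}
    (hM : M.IsHermitian) (hM_nonneg : ∀ x, 0 ≤ x ⬝ᵥ (M *ᵥ x))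
    (hM_le : ∀ x, 3 * (x ⬝ᵥ (M *ᵥ x)) ≤ x ⬝ᵥ x) :
    ∫⁻ g : ι → ℝ, ENNReal.ofReal (Real.exp (-(g ⬝ᵥ g) / 2 + g ⬝ᵥ (M *ᵥ g)))
      ≤ ENNReal.ofReal (√(2 * π) ^ Fintype.card ι * Real.exp (2 * M.trace)) := by
  have hμ (i : ι) : 0 ≤ hM.eigenvalues i ∧ 3 * hM.eigenvalues i ≤ 1 := by
    rw [hM.eigenvalues_eq_dotProduct_mulVec]
    exact ⟨hM_nonneg _, (hM_le _).trans_eq (hM.dotProduct_self_eigenvectorBasis i)⟩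
  rw [hM.lintegral_gaussian_exp_quadForm fun i ↦ by linarith [hμ i]]
  refine ENNReal.ofReal_le_ofReal ?_
  calc ∏ i, √(2 * π) / √(1 - 2 * hM.eigenvalues i)
      ≤ ∏ i, √(2 * π) * Real.exp (2 * hM.eigenvalues i) := by
        refine Finset.prod_le_prod (fun i _ ↦ by positivity) fun i _ ↦ ?_
        rw [div_eq_mul_inv]
        gcongr
        exact inv_sqrt_one_sub_le_exp (by linarith [hμ i]) (by linarith [hμ i])
    _ = √(2 * π) ^ Fintype.card ι * Real.exp (2 * M.trace) := by
        simp [Finset.prod_mul_distrib, ← Real.exp_sum, ← Finset.mul_sum,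
          hM.trace_eq_sum_eigenvalues]

lemma dotProduct_self_transpose_mulVec_le {A : Matrix κ ι ℝ} {L : ℝ} (hL : 0 ≤ L)
    (hA : ∀ v, (A *ᵥ v) ⬝ᵥ (A *ᵥ v) ≤ L * (v ⬝ᵥ v)) (x : κ → ℝ) :
    (Aᵀ *ᵥ x) ⬝ᵥ (Aᵀ *ᵥ x) ≤ L * (x ⬝ᵥ x) := by
  set y := Aᵀ *ᵥ x
  have hy : y ⬝ᵥ y = x ⬝ᵥ (A *ᵥ y) := by
    rw [dotProduct_mulVec, ← mulVec_transpose, transpose_transpose, dotProduct_comm]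
  have hcs : (x ⬝ᵥ (A *ᵥ y)) ^ 2 ≤ (x ⬝ᵥ x) * ((A *ᵥ y) ⬝ᵥ (A *ᵥ y)) := by
    simpa [dotProduct, sq] using Finset.sum_mul_sq_le_sq_mul_sq Finset.univ x (A *ᵥ y)
  have hsq : (y ⬝ᵥ y) * (y ⬝ᵥ y) ≤ L * (x ⬝ᵥ x) * (y ⬝ᵥ y) := by
    calc (y ⬝ᵥ y) * (y ⬝ᵥ y) = (x ⬝ᵥ (A *ᵥ y)) ^ 2 := by rw [← hy, sq]
      _ ≤ (x ⬝ᵥ x) * ((A *ᵥ y) ⬝ᵥ (A *ᵥ y)) := hcs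
      _ ≤ (x ⬝ᵥ x) * (L * (y ⬝ᵥ y)) := mul_le_mul_of_nonneg_left (hA y) (dotProduct_self_nonneg x)
      _ = L * (x ⬝ᵥ x) * (y ⬝ᵥ y) := by ring
  rcases (dotProduct_self_nonneg y).eq_or_lt with h0 | hpos
  · rw [← h0]
    exact mul_nonneg hL (dotProduct_self_nonneg x)
  · exact le_of_mul_le_mul_right hsq hpos

lemma dotProduct_mulVec_mul_transpose (A : Matrix κ ι ℝ) (x : κ → ℝ) :
    x ⬝ᵥ ((A * Aᵀ) *ᵥ x) = (Aᵀ *ᵥ x) ⬝ᵥ (Aᵀ *ᵥ x) := by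
  rw [← mulVec_mulVec, dotProduct_mulVec, ← mulVec_transpose]

lemma lintegral_gaussian_exp_transpose_mulVec_le (A : Matrix κ ι ℝ) {s b : ℝ} (hs : 0 ≤ s)
    (hsb : 3 * s * b ^ 2 ≤ 1) (hA : ∀ v, (A *ᵥ v) ⬝ᵥ (A *ᵥ v) ≤ b ^ 2 * (v ⬝ᵥ v)) :
    ∫⁻ g : κ → ℝ, ENNReal.ofReal (exp (-(g ⬝ᵥ g) / 2 + s * ((Aᵀ *ᵥ g) ⬝ᵥ (Aᵀ *ᵥ g))))
      ≤ ENNReal.ofReal (√(2 * π) ^ Fintype.card κ * exp (2 * s * ∑ j, ∑ i, A j i ^ 2)) := by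
  classical
  set M := s • (A * Aᵀ)
  have hquad (x : κ → ℝ) : x ⬝ᵥ (M *ᵥ x) = s * ((Aᵀ *ᵥ x) ⬝ᵥ (Aᵀ *ᵥ x)) := by
    rw [smul_mulVec, dotProduct_smul, dotProduct_mulVec_mul_transpose, smul_eq_mul]
  have hM : M.IsHermitian := by
    simp [M, IsHermitian, conjTranspose_eq_transpose_of_trivial, transpose_mul]
  have htrace : M.trace = s * ∑ j, ∑ i, A j i ^ 2 := by
    simp [M, trace, mul_apply, sq, Finset.mul_sum]
  have hM_nonneg (x : κ → ℝ) : 0 ≤ x ⬝ᵥ (M *ᵥ x) := by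
    rw [hquad]
    exact mul_nonneg hs (dotProduct_self_nonneg _)
  have hM_le (x : κ → ℝ) : 3 * (x ⬝ᵥ (M *ᵥ x)) ≤ x ⬝ᵥ x := by
    rw [hquad]
    have hAt := dotProduct_self_transpose_mulVec_le (sq_nonneg b) hA x
    nlinarith [mul_le_mul_of_nonneg_left hAt hs,
      mul_le_mul_of_nonneg_right hsb (dotProduct_self_nonneg x)]
  simpa only [hquad, htrace, mul_assoc] using hM.lintegral_gaussian_exp_quadForm_le hM_nonneg hM_le

section

variable {Ω : Type*} [MeasurableSpace Ω] {μ : Measure Ω}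

lemma measure_lt_le_exp_mul_lintegral {X : Ω → ℝ} (hX : AEMeasurable X μ) {l : ℝ} (hl : 0 ≤ l)
    (u : ℝ) :
    μ {ω | u < X ω}
      ≤ ENNReal.ofReal (exp (-(l * u))) * ∫⁻ ω, ENNReal.ofReal (exp (l * X ω)) ∂μ := by
  set ε := ENNReal.ofReal (exp (l * u))
  have hsub : {ω | u < X ω} ⊆ {ω | ε ≤ ENNReal.ofReal (exp (l * X ω))} := fun ω hω ↦
    ENNReal.ofReal_le_ofReal (exp_le_exp.2 (mul_le_mul_of_nonneg_left (le_of_lt hω) hl))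
  have hinv : ENNReal.ofReal (exp (-(l * u))) * ε = 1 := by
    rw [← ENNReal.ofReal_mul (exp_pos _).le, ← exp_add, neg_add_cancel, exp_zero,
      ENNReal.ofReal_one]
  calc μ {ω | u < X ω} ≤ μ {ω | ε ≤ ENNReal.ofReal (exp (l * X ω))} := measure_mono hsub
    _ = ENNReal.ofReal (exp (-(l * u))) * (ε * μ {ω | ε ≤ ENNReal.ofReal (exp (l * X ω))}) := by
        rw [← mul_assoc, hinv, one_mul]
    _ ≤ ENNReal.ofReal (exp (-(l * u))) * ∫⁻ ω, ENNReal.ofReal (exp (l * X ω)) ∂μ := by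
        gcongr
        exact mul_meas_ge_le_lintegral₀ (by fun_prop) ε

lemma lintegral_exp_mul_dotProduct_self_mulVec_le [SFinite μ] {ξ : Ω → ι → ℝ} {c : ℝ}
    (hξ_meas : Measurable ξ)
    (hξ : ∀ z, ∫⁻ ω, ENNReal.ofReal (exp (z ⬝ᵥ ξ ω)) ∂μ ≤ ENNReal.ofReal (exp (c * (z ⬝ᵥ z) / 2)))
    (A : Matrix κ ι ℝ) {b l : ℝ} (hc : 0 ≤ c) (hl : 0 ≤ l) (hlb : 3 * c * l * b ^ 2 ≤ 1)
    (hA : ∀ v, (A *ᵥ v) ⬝ᵥ (A *ᵥ v) ≤ b ^ 2 * (v ⬝ᵥ v)) :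
    ∫⁻ ω, ENNReal.ofReal (exp (l * ((A *ᵥ ξ ω) ⬝ᵥ (A *ᵥ ξ ω)))) ∂μ
      ≤ ENNReal.ofReal (exp (2 * c * l * ∑ j, ∑ i, A j i ^ 2)) := by
  set K : ℝ := √(2 * π) ^ Fintype.card κ
  have hK : 0 < K := by positivity
  set r : ℝ := √(2 * l)
  have hr : r ^ 2 = 2 * l := sq_sqrt (by positivity)
  rw [← ENNReal.mul_le_mul_iff_right (ENNReal.ofReal_pos.2 hK).ne' ENNReal.ofReal_ne_top,
    ← lintegral_const_mul' _ _ ENNReal.ofReal_ne_top]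
  have hlin (g : κ → ℝ) (ω : Ω) : g ⬝ᵥ (r • (A *ᵥ ξ ω)) = (r • (Aᵀ *ᵥ g)) ⬝ᵥ ξ ω := by
    rw [dotProduct_smul, smul_dotProduct, dotProduct_mulVec, ← mulVec_transpose]
  calc ∫⁻ ω, ENNReal.ofReal K * ENNReal.ofReal (exp (l * ((A *ᵥ ξ ω) ⬝ᵥ (A *ᵥ ξ ω)))) ∂μ
      = ∫⁻ ω, (∫⁻ g : κ → ℝ,
          ENNReal.ofReal (exp (-(g ⬝ᵥ g) / 2 + g ⬝ᵥ (r • (A *ᵥ ξ ω))))) ∂μ := by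
        refine lintegral_congr fun ω ↦ ?_
        rw [lintegral_gaussian_exp_dotProduct, ← ENNReal.ofReal_mul hK.le, smul_dotProduct,
          dotProduct_smul, smul_eq_mul, smul_eq_mul]
        congr 3
        linear_combination (-((A *ᵥ ξ ω) ⬝ᵥ (A *ᵥ ξ ω)) / 2) * hr
    _ = ∫⁻ g : κ → ℝ, ∫⁻ ω, ENNReal.ofReal (exp (-(g ⬝ᵥ g) / 2 + g ⬝ᵥ (r • (A *ᵥ ξ ω)))) ∂μ :=
        lintegral_lintegral_swap (by unfold dotProduct mulVec Function.uncurry; fun_prop)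
    _ ≤ ∫⁻ g : κ → ℝ,
          ENNReal.ofReal (exp (-(g ⬝ᵥ g) / 2 + c * l * ((Aᵀ *ᵥ g) ⬝ᵥ (Aᵀ *ᵥ g)))) := by
        refine lintegral_mono fun g ↦ ?_
        simp_rw [hlin, exp_add, ENNReal.ofReal_mul (exp_pos _).le]
        rw [lintegral_const_mul' _ _ ENNReal.ofReal_ne_top]
        gcongr
        refine (hξ _).trans_eq ?_
        rw [smul_dotProduct, dotProduct_smul, smul_eq_mul, smul_eq_mul]
        congr 2
        linear_combination (c * ((Aᵀ *ᵥ g) ⬝ᵥ (Aᵀ *ᵥ g)) / 2) * hr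
    _ ≤ ENNReal.ofReal (K * exp (2 * (c * l) * ∑ j, ∑ i, A j i ^ 2)) :=
        lintegral_gaussian_exp_transpose_mulVec_le A (by positivity) (by linarith) hA
    _ = _ := by rw [ENNReal.ofReal_mul hK.le, ← mul_assoc 2 c l]

theorem measure_lt_dotProduct_self_mulVec_le_exp [SFinite μ] {ξ : Ω → ι → ℝ} {c : ℝ}
    (hξ_meas : Measurable ξ)
    (hξ : ∀ z, ∫⁻ ω, ENNReal.ofReal (exp (z ⬝ᵥ ξ ω)) ∂μ ≤ ENNReal.ofReal (exp (c * (z ⬝ᵥ z) / 2)))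
    (hc : 0 < c) (A : Matrix κ ι ℝ) {b : ℝ} (hb : 0 ≤ b)
    (hA : ∀ v, (A *ᵥ v) ⬝ᵥ (A *ᵥ v) ≤ b ^ 2 * (v ⬝ᵥ v)) (t : ℝ) :
    μ {ω | 2 * c * ∑ j, ∑ i, A j i ^ 2 + 3 * t * c * b ^ 2 < (A *ᵥ ξ ω) ⬝ᵥ (A *ᵥ ξ ω)}
      ≤ ENNReal.ofReal (exp (-t)) := by
  rcases hb.eq_or_lt with rfl | hb
  · have hempty : {ω | 2 * c * ∑ j, ∑ i, A j i ^ 2 + 3 * t * c * 0 ^ 2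
        < (A *ᵥ ξ ω) ⬝ᵥ (A *ᵥ ξ ω)} = ∅ := by
      refine Set.eq_empty_of_forall_notMem fun ω hω ↦ ?_
      have hF : 0 ≤ ∑ j, ∑ i, A j i ^ 2 := by positivity
      nlinarith [hA (ξ ω), Set.mem_ofPred.1 hω]
    rw [hempty, measure_empty]
    exact zero_le
  set l := 1 / (3 * c * b ^ 2)
  have hl : 0 < l := by positivity
  have hlb : 3 * c * l * b ^ 2 = 1 := by simp only [l]; field_simp
  calc μ {ω | 2 * c * ∑ j, ∑ i, A j i ^ 2 + 3 * t * c * b ^ 2 < (A *ᵥ ξ ω) ⬝ᵥ (A *ᵥ ξ ω)}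
      ≤ ENNReal.ofReal (exp (-(l * (2 * c * ∑ j, ∑ i, A j i ^ 2 + 3 * t * c * b ^ 2))))
        * ∫⁻ ω, ENNReal.ofReal (exp (l * ((A *ᵥ ξ ω) ⬝ᵥ (A *ᵥ ξ ω)))) ∂μ :=
        measure_lt_le_exp_mul_lintegral (by unfold dotProduct mulVec; fun_prop) hl.le _
    _ ≤ ENNReal.ofReal (exp (-(l * (2 * c * ∑ j, ∑ i, A j i ^ 2 + 3 * t * c * b ^ 2))))
        * ENNReal.ofReal (exp (2 * c * l * ∑ j, ∑ i, A j i ^ 2)) := by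
        gcongr
        exact lintegral_exp_mul_dotProduct_self_mulVec_le hξ_meas hξ A hc.le hl.le hlb.le hA
    _ = ENNReal.ofReal (exp (-t)) := by
        rw [← ENNReal.ofReal_mul (exp_pos _).le, ← exp_add]
        congr 2
        linear_combination (-t) * hlb

lemma integral_eq_measureReal_of_forall_eq_zero_or_one {X : Ω → ℝ} (hX : Measurable X)
    (h01 : ∀ ω, X ω = 0 ∨ X ω = 1) :
    ∫ ω, X ω ∂μ = μ.real {ω | X ω = 1} := by
  have hind (ω : Ω) : X ω = {ω | X ω = 1}.indicator 1 ω := by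
    rcases h01 ω with h | h <;> simp [h]
  rw [integral_congr_ae (ae_of_all _ hind)]
  exact integral_indicator_one (hX (measurableSet_singleton 1))

lemma ProbabilityTheory.HasSubgaussianMGF.lintegral_exp_le {X : Ω → ℝ} {c : NNReal}
    (h : HasSubgaussianMGF X c μ) :
    ∫⁻ ω, ENNReal.ofReal (exp (X ω)) ∂μ ≤ ENNReal.ofReal (exp (c / 2)) := by
  have hint := h.integrable_exp_mul 1
  simp only [one_mul] at hint
  rw [← ofReal_integral_eq_lintegral_ofReal hint (ae_of_all _ fun _ ↦ (exp_pos _).le)]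
  simpa [mgf] using ENNReal.ofReal_le_ofReal (h.mgf_le 1)

lemma lintegral_exp_dotProduct_le_of_iIndepFun {X : ι → Ω → ℝ} {c : NNReal}
    (h_indep : iIndepFun X μ) (h_subG : ∀ i, HasSubgaussianMGF (X i) c μ) (z : ι → ℝ) :
    ∫⁻ ω, ENNReal.ofReal (exp (z ⬝ᵥ fun i ↦ X i ω)) ∂μ
      ≤ ENNReal.ofReal (exp (c * (z ⬝ᵥ z) / 2)) := by
  have h_indep' : iIndepFun (fun i ω ↦ z i * X i ω) μ :=
    h_indep.comp (fun i x ↦ z i * x) fun i ↦ measurable_const_mul (z i)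
  have h := (HasSubgaussianMGF.sum_of_iIndepFun h_indep' (s := Finset.univ)
    fun i _ ↦ (h_subG i).const_mul (z i)).lintegral_exp_le
  refine h.trans_eq ?_
  rw [NNReal.coe_sum, dotProduct, Finset.mul_sum, Finset.sum_div, Finset.sum_div]
  congr 3 with i
  show z i ^ 2 * (c : ℝ) / 2 = _
  ring

end

end

theorem stmt3_general {Ω : Type*} [MeasureSpace Ω] [IsProbabilityMeasure (ℙ : Measure Ω)]
    {n k : ℕ} (a : Fin n → Ω → ℝ) (θ : Fin n → ℝ)
    (hmeas : ∀ i, Measurable (a i))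
    (hindep : iIndepFun a ℙ)
    (hval : ∀ i ω, a i ω = 0 ∨ a i ω = 1)
    (hθ : ∀ i, (ℙ {ω | a i ω = 1}).toReal = θ i)
    (A : Matrix (Fin k) (Fin n) ℝ) (opA : ℝ) (hopA : 0 ≤ opA)
    (hop : ∀ v : Fin n → ℝ, ∑ j, (A.mulVec v j) ^ 2 ≤ opA ^ 2 * ∑ i, (v i) ^ 2)
    (t : ℝ) :
    ℙ {ω | (∑ j, ∑ i, (A j i) ^ 2) / 2 + 3 * t / 4 * opA ^ 2
        < ∑ j, (A.mulVec (fun i => a i ω - θ i) j) ^ 2}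
      ≤ ENNReal.ofReal (Real.exp (-t)) := by
  have hmean (i : Fin n) : ∫ ω, a i ω = θ i := by
    rw [integral_eq_measureReal_of_forall_eq_zero_or_one (hmeas i) (hval i), measureReal_def, hθ]
  have h_subG (i : Fin n) : HasSubgaussianMGF (fun ω ↦ a i ω - θ i) (1 / 4) ℙ := by
    have h := hasSubgaussianMGF_of_mem_Icc (μ := ℙ) (a := 0) (b := 1) (hmeas i).aemeasurable
      (ae_of_all _ fun ω ↦ by rcases hval i ω with h | h <;> simp [h])
    rw [hmean] at h
    convert h using 1
    ext
    norm_num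
  have h_indep : iIndepFun (fun i ω ↦ a i ω - θ i) ℙ :=
    hindep.comp (fun i x ↦ x - θ i) fun i ↦ measurable_sub_const (θ i)
  have hA (v : Fin n → ℝ) : (A *ᵥ v) ⬝ᵥ (A *ᵥ v) ≤ opA ^ 2 * (v ⬝ᵥ v) := by
    simpa [dotProduct, sq] using hop v
  have h := measure_lt_dotProduct_self_mulVec_le_exp (ξ := fun ω i ↦ a i ω - θ i) (by fun_prop)
    (lintegral_exp_dotProduct_le_of_iIndepFun h_indep h_subG) (by norm_num) A hopA hA t
  refine (measure_mono fun ω hω ↦ ?_).trans h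
  simp only [Set.mem_ofPred] at hω ⊢
  norm_num [dotProduct, ← sq] at hω ⊢
  linarith

theorem stmt3 {Ω : Type*} [MeasureSpace Ω] [IsProbabilityMeasure (ℙ : Measure Ω)]
    {n k : ℕ} (a : Fin n → Ω → ℝ) (θ : Fin n → ℝ)
    (hmeas : ∀ i, Measurable (a i))
    (hindep : iIndepFun a ℙ)
    (hval : ∀ i ω, a i ω = 0 ∨ a i ω = 1)
    (hθ : ∀ i, (ℙ {ω | a i ω = 1}).toReal = θ i)
    (A : Matrix (Fin k) (Fin n) ℝ) (opA : ℝ) (hopA : 0 ≤ opA)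
    (hop : ∀ v : Fin n → ℝ, ∑ j, (A.mulVec v j) ^ 2 ≤ opA ^ 2 * ∑ i, (v i) ^ 2)
    (t : ℝ) (ht : 0 < t) :
    ℙ {ω | (∑ j, ∑ i, (A j i) ^ 2) / 2 + 3 * t / 4 * opA ^ 2
        < ∑ j, (A.mulVec (fun i => a i ω - θ i) j) ^ 2}
      ≤ ENNReal.ofReal (Real.exp (-t)) :=
  stmt3_general a θ hmeas hindep hval hθ A opA hopA hop t
end

section
/- Let $\gamma\in(0,1]$ and suppose $\gamma m$ and $n/m$ are positive integers with $\gamma m\ge 2$. Then $\log((\gamma n)!) - \gamma m\,\log((n/m)!) \ge \frac{\gamma n}{4}\log(\gamma m)$. -/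
lemma gen (a : ℕ) : ∀ b c : ℕ, a * b ≤ c →
    Nat.factorial c * ((a + 1) ^ b * Nat.factorial b) ≤ Nat.factorial (c + b) := by
  intro b
  induction b with
  | zero => simp
  | succ b ih =>
    intro c hc
    have h1 : a * b ≤ c := by nlinarith
    have h2 := ih c h1
    have h3 : (a + 1) * (b + 1) ≤ c + b + 1 := by nlinarith
    calc Nat.factorial c * ((a + 1) ^ (b + 1) * Nat.factorial (b + 1))
        = (Nat.factorial c * ((a + 1) ^ b * Nat.factorial b)) * ((a + 1) * (b + 1)) := by
          rw [Nat.factorial_succ]; ring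
      _ ≤ Nat.factorial (c + b) * (c + b + 1) := Nat.mul_le_mul h2 h3
      _ = Nat.factorial (c + b + 1) := by rw [Nat.factorial_succ]; ring
      _ = Nat.factorial (c + (b + 1)) := by ring_nf

lemma multi (a b : ℕ) : Nat.factorial b ^ a * Nat.factorial a ^ b ≤ Nat.factorial (a * b) := by
  induction a with
  | zero => simp
  | succ a ih =>
    have key := gen a b (a * b) le_rfl
    calc Nat.factorial b ^ (a + 1) * Nat.factorial (a + 1) ^ b
        = (Nat.factorial b ^ a * Nat.factorial a ^ b) * ((a + 1) ^ b * Nat.factorial b) := by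
          rw [Nat.factorial_succ, mul_pow]; ring
      _ ≤ Nat.factorial (a * b) * ((a + 1) ^ b * Nat.factorial b) :=
          Nat.mul_le_mul_right _ ih
      _ ≤ Nat.factorial (a * b + b) := key
      _ = Nat.factorial ((a + 1) * b) := by ring_nf

lemma sq_fact (a : ℕ) : a ^ a ≤ Nat.factorial a ^ 2 := by
  have h1 : Nat.factorial a = ∏ i ∈ Finset.range a, (i + 1) :=
    (Finset.prod_range_add_one_eq_factorial a).symm
  have h2 : Nat.factorial a = ∏ i ∈ Finset.range a, (a - i) := by
    rw [h1, ← Finset.prod_range_reflect]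
    apply Finset.prod_congr rfl
    intro i hi
    simp at hi
    omega
  calc a ^ a = ∏ _i ∈ Finset.range a, a := by simp
    _ ≤ ∏ i ∈ Finset.range a, (i + 1) * (a - i) := by
        apply Finset.prod_le_prod'
        intro i hi
        simp at hi
        nlinarith [Nat.sub_add_cancel (le_of_lt hi)]
    _ = Nat.factorial a ^ 2 := by
        rw [Finset.prod_mul_distrib, ← h1, ← h2, sq]

theorem stmt6 (γ : ℝ) (m n : ℕ) (hγ0 : 0 < γ) (hγ1 : γ ≤ 1) (hm : 0 < m)
    (hdvd : m ∣ n) (hb : 0 < n / m) (a : ℕ) (ha : (a : ℝ) = γ * m) (ha2 : 2 ≤ a) :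
    γ * n / 4 * Real.log (γ * m)
      ≤ Real.log (Nat.factorial (a * (n / m)))
        - γ * m * Real.log (Nat.factorial (n / m)) := by
  set b := n / m with hbdef
  have hn : (n : ℝ) = (m : ℝ) * (b : ℝ) := by
    rw [hbdef]
    exact_mod_cast (Nat.mul_div_cancel' hdvd).symm
  have hγn : γ * n = (a : ℝ) * b := by rw [hn, ha]; ring
  -- log of multinomial bound
  have hmul := multi a b
  have hfb : (0 : ℝ) < (Nat.factorial b : ℝ) := by exact_mod_cast Nat.factorial_pos b
  have hfa : (0 : ℝ) < (Nat.factorial a : ℝ) := by exact_mod_cast Nat.factorial_pos a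
  have hmulR : ((Nat.factorial b : ℝ)) ^ a * ((Nat.factorial a : ℝ)) ^ b
      ≤ (Nat.factorial (a * b) : ℝ) := by exact_mod_cast hmul
  have hlog1 : (a : ℝ) * Real.log (Nat.factorial b) + (b : ℝ) * Real.log (Nat.factorial a)
      ≤ Real.log (Nat.factorial (a * b)) := by
    have := Real.log_le_log (by positivity) hmulR
    rwa [Real.log_mul (by positivity) (by positivity), Real.log_pow, Real.log_pow] at this
  -- log a! ≥ (a/2) log a
  have hsq := sq_fact a
  have hsqR : ((a : ℝ)) ^ a ≤ ((Nat.factorial a : ℝ)) ^ 2 := by exact_mod_cast hsq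
  have hlog2 : (a : ℝ) * Real.log a ≤ 2 * Real.log (Nat.factorial a) := by
    have := Real.log_le_log (by positivity) hsqR
    rwa [Real.log_pow, Real.log_pow] at this
  have hloga : 0 ≤ Real.log a := Real.log_nonneg (by exact_mod_cast Nat.one_le_iff_ne_zero.mpr (by omega))
  have hb1 : (1 : ℝ) ≤ b := by exact_mod_cast hb
  rw [← ha, hγn]
  have hla : 0 ≤ Real.log (Nat.factorial a) := Real.log_nonneg (by exact_mod_cast Nat.factorial_pos a)
  nlinarith [hlog1, hlog2, hloga, hb1, mul_le_mul_of_nonneg_left hlog2 (le_of_lt (lt_of_lt_of_le one_pos hb1))]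
end
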